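/- (Hahn's characterization, one direction) Let u be a regular linear functional satisfying D(φu) = ψu with (φ, ψ) an admissible pair, and let (P_n) be the monic OPS for u. Then the sequence of normalized derivatives Q_n := P_{n+1}'/(n+1) is a monic OPS with respect to the functional φu, and ⟨φu, Q_n Q_m⟩ = −(d_n/(n+1)) ⟨u, P_{n+1}²⟩ δ_{nm}, where d_n := na + p with a the coefficient of x² in φ and p the coefficient of x in ψ. -/

import Mathlib

/-!
Apply the Pearson equation to `r = P_{n+1} Q_m`: it turns `⟨φu, P_{n+1}' Q_m⟩` into
`-⟨u, P_{n+1} (ψ Q_m + φ Q_m')⟩`. For `m ≤ n` the polynomial `ψ Q_m + φ Q_m'` has degree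
at most `m + 1` and coefficient `m a + p` in degree `m + 1`, so orthogonality of `P_{n+1}` to lower
degrees leaves `-(m a + p) ⟨u, P_{n+1} P_{m+1}⟩`, which vanishes unless `m = n`.
-/

open Polynomial

theorem LinearMap.map_C_mul {R : Type*} [CommSemiring R] (u : R[X] →ₗ[R] R) (t : R) (f : R[X]) :
    u (C t * f) = t * u f := by
  rw [← smul_eq_C_mul, map_smul, smul_eq_mul]

theorem LinearMap.map_mul_derivative_mul {R : Type*} [CommRing R] {u : R[X] →ₗ[R] R}
    {φ ψ : R[X]} (hPearson : ∀ r, -u (φ * derivative r) = u (ψ * r)) (f g : R[X]) :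
    u (φ * (derivative f * g)) = -u (f * (ψ * g + φ * derivative g)) := by
  calc u (φ * (derivative f * g))
      = u (φ * derivative (f * g)) - u (φ * (f * derivative g)) := by
        rw [derivative_mul, mul_add, map_add]; ring
    _ = -u (ψ * (f * g)) - u (φ * (f * derivative g)) := by rw [← hPearson]; ring
    _ = -u (f * (ψ * g + φ * derivative g)) := by
        rw [show f * (ψ * g + φ * derivative g) = ψ * (f * g) + φ * (f * derivative g) by ring,
          map_add]
        ring

section Pearson

variable {R : Type*} [CommRing R]

theorem coeff_X_mul_derivative (g : R[X]) (k : ℕ) :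
    (X * derivative g).coeff k = k * g.coeff k := by
  cases k with
  | zero => simp
  | succ k => rw [coeff_X_mul, coeff_derivative, mul_comm, Nat.cast_succ]

variable (a b c p q : R)

local notation "φ" => C a * X ^ 2 + C b * X + C c
local notation "ψ" => C p * X + C q

theorem coeff_pearson_succ (g : R[X]) (k : ℕ) :
    (ψ * g + φ * derivative g).coeff (k + 1) =
      (k * a + p) * g.coeff k + ((k + 1) * b + q) * g.coeff (k + 1) +
        (k + 2) * c * g.coeff (k + 2) := by
  have hsplit : ψ * g + φ * derivative g = C p * (X * g) + C q * g +
      C a * (X * (X * derivative g)) + C b * (X * derivative g) + C c * derivative g := by ring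
  rw [hsplit]
  simp only [coeff_add, coeff_C_mul, coeff_X_mul, coeff_X_mul_derivative, coeff_derivative]
  push_cast
  ring

variable {a b c p q} {g : R[X]} {m : ℕ}

theorem natDegree_pearson_le (hg : g.natDegree ≤ m) :
    (ψ * g + φ * derivative g).natDegree ≤ m + 1 := by
  refine natDegree_le_iff_coeff_eq_zero.mpr fun N hN => ?_
  obtain ⟨k, rfl⟩ : ∃ k, N = k + 1 := ⟨N - 1, by omega⟩
  have hk : g.natDegree < k := by omega
  rw [coeff_pearson_succ, coeff_eq_zero_of_natDegree_lt hk,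
    coeff_eq_zero_of_natDegree_lt (hk.trans k.lt_succ_self),
    coeff_eq_zero_of_natDegree_lt (by omega : g.natDegree < k + 2)]
  ring

theorem coeff_pearson_of_natDegree_le (hg : g.natDegree ≤ m) :
    (ψ * g + φ * derivative g).coeff (m + 1) = (m * a + p) * g.coeff m := by
  rw [coeff_pearson_succ, coeff_eq_zero_of_natDegree_lt (by omega : g.natDegree < m + 1),
    coeff_eq_zero_of_natDegree_lt (by omega : g.natDegree < m + 2)]
  ring

end Pearson

section OrthogonalFamily

variable {K : Type*} [Field K] {P : ℕ → K[X]} (hmonic : ∀ n, (P n).Monic)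
  (hdeg : ∀ n, (P n).natDegree = n)
  {u : K[X] →ₗ[K] K} (horth : ∀ m n, m ≠ n → u (P m * P n) = 0)
include hmonic hdeg horth

theorem map_mul_eq_zero_of_degree_lt {n : ℕ} {s : K[X]} (hs : s.degree < n) :
    u (P n * s) = 0 := by
  induction s using degree_lt_wf.induction with
  | h s ih =>
  rcases eq_or_ne s 0 with rfl | hs0
  · simp
  set d := s.natDegree
  have hdn : d < n := by rwa [degree_eq_natDegree hs0, Nat.cast_lt] at hs
  have hPd : (C s.leadingCoeff * P d).degree = s.degree := by
    rw [degree_C_mul (leadingCoeff_ne_zero.mpr hs0), degree_eq_natDegree (hmonic d).ne_zero,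
      hdeg, degree_eq_natDegree hs0]
  have hlower : (s - C s.leadingCoeff * P d).degree < s.degree :=
    degree_sub_lt_left hPd.symm hs0 (by simp [(hmonic d).leadingCoeff])
  calc u (P n * s)
      = s.leadingCoeff * u (P n * P d) + u (P n * (s - C s.leadingCoeff * P d)) := by
        rw [← u.map_C_mul, ← map_add]; ring_nf
    _ = 0 := by rw [horth n d hdn.ne', mul_zero, zero_add, ih _ hlower (hlower.trans hs)]

theorem map_mul_eq_coeff_mul_of_natDegree_le {m n : ℕ} {S : K[X]} (hS : S.natDegree ≤ m)
    (hmn : m ≤ n) : u (P n * S) = S.coeff m * u (P n * P m) := by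
  set T := S - C (S.coeff m) * P m
  have hT : T.degree < m := by
    refine degree_lt_iff_coeff_zero _ _ |>.mpr fun k hk => ?_
    rcases (Nat.cast_le.mp hk).eq_or_lt with rfl | hlt
    · have hPm : (P m).coeff m = 1 := by simpa [hdeg] using (hmonic m).coeff_natDegree
      rw [coeff_sub, coeff_C_mul, hPm, mul_one, sub_self]
    · rw [coeff_sub, coeff_C_mul, coeff_eq_zero_of_natDegree_lt (hS.trans_lt hlt),
        coeff_eq_zero_of_natDegree_lt (p := P m) (by rwa [hdeg]), mul_zero, sub_zero]
  calc u (P n * S) = S.coeff m * u (P n * P m) + u (P n * T) := by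
        rw [← u.map_C_mul, ← map_add]; congr 1; ring
    _ = S.coeff m * u (P n * P m) := by
        rw [map_mul_eq_zero_of_degree_lt hmonic hdeg horth (hT.trans_le (by exact_mod_cast hmn)),
          add_zero]

end OrthogonalFamily

section NormalizedDerivative

variable {K : Type*} [Field K] [CharZero K] {f : K[X]} {n : ℕ}

theorem natDegree_C_inv_mul_derivative (hf : f.natDegree = n + 1) :
    (C ((n : K) + 1)⁻¹ * derivative f).natDegree = n := by
  rw [natDegree_C_mul (inv_ne_zero (Nat.cast_add_one_ne_zero n)), natDegree_derivative, hf,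
    Nat.add_sub_cancel]

theorem monic_C_inv_mul_derivative (hf : f.Monic) (hdeg : f.natDegree = n + 1) :
    (C ((n : K) + 1)⁻¹ * derivative f).Monic := by
  rw [Monic, leadingCoeff_mul, leadingCoeff_C, leadingCoeff_derivative, hf.leadingCoeff, hdeg,
    one_mul, Nat.cast_succ, inv_mul_cancel₀ (Nat.cast_add_one_ne_zero n)]

end NormalizedDerivative

section Hahn

variable {K : Type*} [Field K] [CharZero K] {a b c p q : K}

local notation "φ" => C a * X ^ 2 + C b * X + C c
local notation "ψ" => C p * X + C q

variable {P : ℕ → K[X]} (hmonic : ∀ n, (P n).Monic) (hdeg : ∀ n, (P n).natDegree = n)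
  {u : K[X] →ₗ[K] K} (horth : ∀ m n, m ≠ n → u (P m * P n) = 0)
include hmonic hdeg horth

theorem map_phi_mul_normalized_derivatives
    (hPearson : ∀ r, -u (φ * derivative r) = u (ψ * r)) {m n : ℕ} (hmn : m ≤ n) :
    u (φ * (C ((n : K) + 1)⁻¹ * derivative (P (n + 1)) *
        (C ((m : K) + 1)⁻¹ * derivative (P (m + 1))))) =
      -(((m : K) * a + p) / ((n : K) + 1)) * u (P (n + 1) * P (m + 1)) := by
  set Q := C ((m : K) + 1)⁻¹ * derivative (P (m + 1))
  have hQ : Q.natDegree = m := natDegree_C_inv_mul_derivative (hdeg _)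
  have hQmonic : Q.Monic := monic_C_inv_mul_derivative (hmonic _) (hdeg _)
  have hQcoeff : Q.coeff m = 1 := hQ ▸ hQmonic.coeff_natDegree
  calc _ = ((n : K) + 1)⁻¹ * u (φ * (derivative (P (n + 1)) * Q)) := by
        rw [← u.map_C_mul]; congr 1; ring
    _ = ((n : K) + 1)⁻¹ * -u (P (n + 1) * (ψ * Q + φ * derivative Q)) := by
        rw [u.map_mul_derivative_mul hPearson]
    _ = ((n : K) + 1)⁻¹ * -(((m : K) * a + p) * u (P (n + 1) * P (m + 1))) := by
        rw [map_mul_eq_coeff_mul_of_natDegree_le hmonic hdeg horth (natDegree_pearson_le hQ.le)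
          (Nat.succ_le_succ hmn), coeff_pearson_of_natDegree_le hQ.le, hQcoeff, mul_one]
    _ = _ := by ring

end Hahn

theorem hahn_derivatives_OPS_general (u : Polynomial ℂ →ₗ[ℂ] ℂ) (a b c p q : ℂ)
    (P : ℕ → Polynomial ℂ)
    (hmonic : ∀ n, (P n).Monic) (hdeg : ∀ n, (P n).degree = n)
    (horth : ∀ m n, m ≠ n → u (P m * P n) = 0)
    (hPearson : ∀ r : Polynomial ℂ,
      -(u ((C a * X ^ 2 + C b * X + C c) * Polynomial.derivative r)) =
        u ((C p * X + C q) * r)) :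
    (∀ n : ℕ, (C (((n : ℂ) + 1)⁻¹) * Polynomial.derivative (P (n + 1))).Monic) ∧
    (∀ n : ℕ, (C (((n : ℂ) + 1)⁻¹) * Polynomial.derivative (P (n + 1))).degree = n) ∧
    (∀ n m : ℕ,
      u ((C a * X ^ 2 + C b * X + C c) *
          ((C (((n : ℂ) + 1)⁻¹) * Polynomial.derivative (P (n + 1))) *
           (C (((m : ℂ) + 1)⁻¹) * Polynomial.derivative (P (m + 1))))) =
        if n = m then -(((n : ℂ) * a + p) / ((n : ℂ) + 1)) * u (P (n + 1) ^ 2) else 0) := by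
  have hnat : ∀ n, (P n).natDegree = n := fun n => natDegree_eq_of_degree_eq_some (hdeg n)
  have hmonicQ : ∀ n : ℕ, (C (((n : ℂ) + 1)⁻¹) * derivative (P (n + 1))).Monic :=
    fun n => monic_C_inv_mul_derivative (hmonic _) (hnat _)
  have hphi {m n : ℕ} (hmn : m ≤ n) :=
    map_phi_mul_normalized_derivatives hmonic hnat horth hPearson hmn
  refine ⟨hmonicQ, fun n => ?_, fun n m => ?_⟩
  · rw [degree_eq_natDegree (hmonicQ n).ne_zero, natDegree_C_inv_mul_derivative (hnat _)]
  rcases lt_trichotomy n m with h | rfl | h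
  · rw [if_neg h.ne, mul_comm (C _ * _), hphi h.le, horth _ _ (by omega), mul_zero]
  · rw [if_pos rfl, hphi le_rfl, sq]
  · rw [if_neg h.ne', hphi h.le, horth _ _ (by omega), mul_zero]

/-- Hahn's characterization (one direction): if `u` is regular with monic OPS `P` and
satisfies the Pearson equation `D(φu) = ψu` for an admissible pair `(φ, ψ)`, then the
normalized derivatives `Qₙ = P_{n+1}'/(n+1)` form a monic OPS for `φu`, with
`⟨φu, Qₙ Qₘ⟩ = −(dₙ/(n+1)) ⟨u, P_{n+1}²⟩ δₙₘ` where `dₙ = na + p`. -/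
theorem hahn_derivatives_OPS (u : Polynomial ℂ →ₗ[ℂ] ℂ) (a b c p q : ℂ)
    (P : ℕ → Polynomial ℂ)
    (hmonic : ∀ n, (P n).Monic) (hdeg : ∀ n, (P n).degree = n)
    (horth : ∀ m n, m ≠ n → u (P m * P n) = 0)
    (hreg : ∀ n, u (P n * P n) ≠ 0)
    (hadm : ∀ n : ℕ, (n : ℂ) * a + p ≠ 0)
    (hPearson : ∀ r : Polynomial ℂ,
      -(u ((C a * X ^ 2 + C b * X + C c) * Polynomial.derivative r)) =
        u ((C p * X + C q) * r)) :
    (∀ n : ℕ, (C (((n : ℂ) + 1)⁻¹) * Polynomial.derivative (P (n + 1))).Monic) ∧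
    (∀ n : ℕ, (C (((n : ℂ) + 1)⁻¹) * Polynomial.derivative (P (n + 1))).degree = n) ∧
    (∀ n m : ℕ,
      u ((C a * X ^ 2 + C b * X + C c) *
          ((C (((n : ℂ) + 1)⁻¹) * Polynomial.derivative (P (n + 1))) *
           (C (((m : ℂ) + 1)⁻¹) * Polynomial.derivative (P (m + 1))))) =
        if n = m then -(((n : ℂ) * a + p) / ((n : ℂ) + 1)) * u (P (n + 1) ^ 2) else 0) :=
  hahn_derivatives_OPS_general u a b c p q P hmonic hdeg horth hPearson
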